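/- arXiv:2007.00189 — 2 statements merged into one kernel-verified Lean document; each statement's English description precedes it below -/
import Mathlib

section
/- If u solves Lu = f, then for any vertex vector v, ‖u − v‖_L = min over τ ∈ W(f) of ‖DGv − τ‖_{D⁻¹}, and the minimum is attained at τ = DGu. -/
open Matrix

/-- `‖τ‖_{D⁻¹}` for the diagonal weight matrix with weights `w`. -/
noncomputable def normDinv {E : Type} [Fintype E] [DecidableEq E]
    (w : E → ℝ) (τ : E → ℝ) : ℝ :=
  Real.sqrt (τ ⬝ᵥ (Matrix.diagonal (fun e => (w e)⁻¹) *ᵥ τ))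

/-- `‖x‖_L` for `L = Gᵀ D G`. -/
noncomputable def normL {V E : Type} [Fintype V] [Fintype E] [DecidableEq E]
    (G : Matrix E V ℝ) (w : E → ℝ) (x : V → ℝ) : ℝ :=
  Real.sqrt (x ⬝ᵥ ((Gᵀ * Matrix.diagonal w * G) *ᵥ x))


private lemma quad_eq {V E : Type} [Fintype V] [Fintype E] [DecidableEq E]
    (G : Matrix E V ℝ) (w : E → ℝ) (z : V → ℝ) :
    z ⬝ᵥ ((Gᵀ * Matrix.diagonal w * G) *ᵥ z)
      = ∑ e, w e * (G *ᵥ z) e ^ 2 := by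
  rw [← Matrix.mulVec_mulVec, ← Matrix.mulVec_mulVec, Matrix.dotProduct_mulVec,
    Matrix.vecMul_transpose]
  simp only [dotProduct, Matrix.mulVec_diagonal]
  exact Finset.sum_congr rfl fun e _ => by ring

private lemma dinv_eq {E : Type} [Fintype E] [DecidableEq E]
    (w : E → ℝ) (a : E → ℝ) :
    a ⬝ᵥ (Matrix.diagonal (fun e => (w e)⁻¹) *ᵥ a) = ∑ e, (w e)⁻¹ * a e ^ 2 := by
  simp only [dotProduct, Matrix.mulVec_diagonal]
  exact Finset.sum_congr rfl fun e _ => by ring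

/-- if `Lu = f`, then `‖u − v‖_L = min_{τ ∈ W(f)} ‖DGv − τ‖_{D⁻¹}`,
with the minimum attained at `τ = DGu`. -/
theorem stmt_2 {V E : Type} [Fintype V] [Fintype E] [DecidableEq V] [DecidableEq E]
    (s t : E → V) (hst : ∀ e, s e ≠ t e)
    (G : Matrix E V ℝ)
    (hG : ∀ e v, G e v = (if v = s e then (1 : ℝ) else 0) - (if v = t e then 1 else 0))
    (w : E → ℝ) (hw : ∀ e, 0 < w e)
    (f : V → ℝ) (u : V → ℝ)
    (hu : (Gᵀ * Matrix.diagonal w * G) *ᵥ u = f)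
    (v : V → ℝ) :
    IsLeast {x : ℝ | ∃ τ : E → ℝ, Gᵀ *ᵥ τ = f ∧
        x = normDinv w (Matrix.diagonal w *ᵥ (G *ᵥ v) - τ)}
      (normL G w (u - v)) ∧
    normDinv w (Matrix.diagonal w *ᵥ (G *ᵥ v) - Matrix.diagonal w *ᵥ (G *ᵥ u))
      = normL G w (u - v) := by
  -- the candidate τ₀ = D G u is in W(f)
  have hτ₀ : Gᵀ *ᵥ (Matrix.diagonal w *ᵥ (G *ᵥ u)) = f := by
    rw [Matrix.mulVec_mulVec, Matrix.mulVec_mulVec]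
    exact hu
  -- equality at τ₀
  have heq : normDinv w (Matrix.diagonal w *ᵥ (G *ᵥ v) - Matrix.diagonal w *ᵥ (G *ᵥ u))
      = normL G w (u - v) := by
    unfold normDinv normL
    congr 1
    rw [dinv_eq, quad_eq]
    have h1 : Matrix.diagonal w *ᵥ (G *ᵥ v) - Matrix.diagonal w *ᵥ (G *ᵥ u)
        = Matrix.diagonal w *ᵥ (G *ᵥ (v - u)) := by
      rw [← Matrix.mulVec_sub, ← Matrix.mulVec_sub]
    rw [h1]
    apply Finset.sum_congr rfl
    intro e _
    have h2 : (G *ᵥ (u - v)) e = -((G *ᵥ (v - u)) e) := by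
      have : G *ᵥ (u - v) = -(G *ᵥ (v - u)) := by
        rw [← Matrix.mulVec_neg]; congr 1; abel
      rw [this]; rfl
    rw [Matrix.mulVec_diagonal, h2]
    have hwe := (hw e).ne'
    field_simp
  refine ⟨⟨⟨Matrix.diagonal w *ᵥ (G *ᵥ u), hτ₀, heq.symm⟩, ?_⟩, heq⟩
  rintro x ⟨τ, hτ, rfl⟩
  -- lower bound
  set g : E → ℝ := G *ᵥ (v - u) with hg
  set b : E → ℝ := Matrix.diagonal w *ᵥ (G *ᵥ u) - τ with hb
  have hcross : ∑ e, g e * b e = 0 := by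
    have : ∑ e, g e * b e = (v - u) ⬝ᵥ (Gᵀ *ᵥ b) := by
      rw [Matrix.dotProduct_mulVec, Matrix.vecMul_transpose]
      rfl
    rw [this, hb, Matrix.mulVec_sub, hτ₀, hτ, sub_self, dotProduct_zero]
  have hdecomp : ∑ e, (w e)⁻¹ * (Matrix.diagonal w *ᵥ (G *ᵥ v) - τ) e ^ 2
      = ∑ e, w e * g e ^ 2 + 2 * ∑ e, g e * b e + ∑ e, (w e)⁻¹ * b e ^ 2 := by
    rw [Finset.mul_sum, ← Finset.sum_add_distrib, ← Finset.sum_add_distrib]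
    apply Finset.sum_congr rfl
    intro e _
    have h1 : (Matrix.diagonal w *ᵥ (G *ᵥ v) - τ) e = w e * g e + b e := by
      simp only [Pi.sub_apply, Matrix.mulVec_diagonal, hb, hg, Matrix.mulVec_sub]
      ring
    rw [h1]
    have hwe := (hw e).ne'
    field_simp
    ring
  have hb2 : 0 ≤ ∑ e, (w e)⁻¹ * b e ^ 2 :=
    Finset.sum_nonneg fun e _ => mul_nonneg (inv_nonneg.2 (hw e).le) (sq_nonneg _)
  unfold normDinv normL
  apply Real.sqrt_le_sqrt
  rw [dinv_eq, quad_eq, hdecomp, hcross]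
  have : ∑ e, w e * (G *ᵥ (u - v)) e ^ 2 = ∑ e, w e * g e ^ 2 := by
    apply Finset.sum_congr rfl
    intro e _
    have h2 : G *ᵥ (u - v) = -(G *ᵥ (v - u)) := by
      rw [← Matrix.mulVec_neg]; congr 1; abel
    rw [h2]
    simp [hg]
  rw [this]
  linarith
end

section
/- Upper bound direction of the error identity: if Lu = f, then for every v ∈ ℝⁿ and every τ with Gᵀ τ = f, ‖u − v‖_L ≤ ‖DGv − τ‖_{D⁻¹}. -/
open Matrix

lemma quadL_eq {V E : Type} [Fintype V] [Fintype E] [DecidableEq E]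
    (G : Matrix E V ℝ) (w : E → ℝ) (x : V → ℝ) :
    x ⬝ᵥ ((Gᵀ * Matrix.diagonal w * G) *ᵥ x) = ∑ e, w e * (G *ᵥ x) e ^ 2 := by
  rw [← Matrix.mulVec_mulVec, ← Matrix.mulVec_mulVec, Matrix.dotProduct_mulVec,
    Matrix.vecMul_transpose]
  simp only [dotProduct, Matrix.mulVec_diagonal]
  congr 1; ext e; ring

/-- if `Lu = f` and `Gᵀτ = f`, then `‖u − v‖_L ≤ ‖DGv − τ‖_{D⁻¹}`. -/
theorem stmt_3 {V E : Type} [Fintype V] [Fintype E] [DecidableEq V] [DecidableEq E]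
    (s t : E → V) (hst : ∀ e, s e ≠ t e)
    (G : Matrix E V ℝ)
    (hG : ∀ e v, G e v = (if v = s e then (1 : ℝ) else 0) - (if v = t e then 1 else 0))
    (w : E → ℝ) (hw : ∀ e, 0 < w e)
    (f : V → ℝ) (u : V → ℝ)
    (hu : (Gᵀ * Matrix.diagonal w * G) *ᵥ u = f)
    (v : V → ℝ) (τ : E → ℝ) (hτ : Gᵀ *ᵥ τ = f) :
    normL G w (u - v) ≤ normDinv w (Matrix.diagonal w *ᵥ (G *ᵥ v) - τ) := by
  set p : E → ℝ := G *ᵥ (u - v) with hp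
  set q : E → ℝ := Matrix.diagonal w *ᵥ (G *ᵥ v) - τ with hq
  set S : ℝ := ∑ e, w e * p e ^ 2 with hS
  set T : ℝ := ∑ e, (w e)⁻¹ * q e ^ 2 with hT
  have hSnn : 0 ≤ S := Finset.sum_nonneg fun e _ =>
    mul_nonneg (hw e).le (sq_nonneg _)
  have hTnn : 0 ≤ T := Finset.sum_nonneg fun e _ =>
    mul_nonneg (inv_nonneg.mpr (hw e).le) (sq_nonneg _)
  -- key identity: ∑ p e * q e = -S
  have hkey : ∑ e, p e * q e = -S := by
    have h1 : ∑ e, p e * q e = p ⬝ᵥ q := rfl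
    have h2 : p ⬝ᵥ q = p ⬝ᵥ (Matrix.diagonal w *ᵥ (G *ᵥ v)) - p ⬝ᵥ τ := by
      rw [hq]; exact dotProduct_sub p _ _
    have h3 : p ⬝ᵥ τ = (u - v) ⬝ᵥ f := by
      rw [hp, dotProduct_comm, Matrix.dotProduct_mulVec, ← hτ,
        ← Matrix.dotProduct_mulVec, dotProduct_comm]
      rw [Matrix.dotProduct_mulVec, Matrix.vecMul_transpose]
    have h4 : p ⬝ᵥ (Matrix.diagonal w *ᵥ (G *ᵥ v)) =
        (u - v) ⬝ᵥ ((Gᵀ * Matrix.diagonal w * G) *ᵥ v) := by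
      rw [hp, ← Matrix.mulVec_mulVec, ← Matrix.mulVec_mulVec,
        Matrix.dotProduct_mulVec (u - v), Matrix.vecMul_transpose]
    have h5 : S = (u - v) ⬝ᵥ f - (u - v) ⬝ᵥ ((Gᵀ * Matrix.diagonal w * G) *ᵥ v) := by
      rw [hS, ← quadL_eq G w (u - v), ← hu, Matrix.mulVec_sub,
        dotProduct_sub]
    rw [h1, h2, h3, h4, h5]; ring
  -- Cauchy–Schwarz
  have hCS : S ^ 2 ≤ S * T := by
    have := Finset.sum_mul_sq_le_sq_mul_sq Finset.univ
      (fun e => Real.sqrt (w e) * p e) (fun e => (Real.sqrt (w e))⁻¹ * (-q e))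
    have hL : ∑ e, (Real.sqrt (w e) * p e) * ((Real.sqrt (w e))⁻¹ * (-q e)) = S := by
      have step : ∑ e, (Real.sqrt (w e) * p e) * ((Real.sqrt (w e))⁻¹ * (-q e)) =
          ∑ e, -(p e * q e) := by
        apply Finset.sum_congr rfl
        intro e _
        have hws : Real.sqrt (w e) ≠ 0 := ne_of_gt (Real.sqrt_pos.mpr (hw e))
        field_simp
      rw [step, Finset.sum_neg_distrib, hkey, neg_neg]
    have hA : ∑ e, (Real.sqrt (w e) * p e) ^ 2 = S := by
      apply Finset.sum_congr rfl
      intro e _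
      rw [mul_pow, Real.sq_sqrt (hw e).le]
    have hB : ∑ e, ((Real.sqrt (w e))⁻¹ * (-q e)) ^ 2 = T := by
      apply Finset.sum_congr rfl
      intro e _
      rw [mul_pow, ← Real.sqrt_inv, Real.sq_sqrt (inv_nonneg.mpr (hw e).le)]
      ring
    rw [hL, hA, hB] at this
    exact this
  have hST : S ≤ T := by
    rcases eq_or_lt_of_le hSnn with h | h
    · linarith
    · nlinarith
  rw [normL, normDinv, quadL_eq]
  have hTeq : q ⬝ᵥ (Matrix.diagonal (fun e => (w e)⁻¹) *ᵥ q) = T := by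
    simp only [dotProduct, Matrix.mulVec_diagonal, hT]
    apply Finset.sum_congr rfl; intro e _; ring
  rw [hTeq]
  exact Real.sqrt_le_sqrt hST
end
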